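/- Fix i ∈ {1, 2, 3}, m ∈ 𝒳_i and λ ∈ ℝ, and define the multiplication–differentiation operator (ℋ_i u)(t, x) = −∂ₜu(t, x) + (−b_i(x) + λ m(t, x)) u(t, x) on 𝒳_i, with the same domain as 𝓛_i. Then the set of real parts of the spectrum of ℋ_i equals the closed interval [min_{x∈D̄_i} ĥ(x), max_{x∈D̄_i} ĥ(x)], where ĥ(x) = −b_i(x) + λ m̂(x). -/

import Mathlib

open MeasureTheory Set Filter Topology

noncomputable section

namespace NW

/-- Points of `ℝ^N`. -/
abbrev V (N : ℕ) := EuclideanSpace ℝ (Fin N)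

/-- Hypothesis (K) on the kernel: continuous, compactly supported, positive at the
origin, symmetric, with total integral one. -/
structure KernelHyp {N : ℕ} (κ : V N → ℝ) : Prop where
  cont : Continuous κ
  compSupp : HasCompactSupport κ
  pos0 : 0 < κ 0
  symm : ∀ z, κ (-z) = κ z
  int1 : (∫ z, κ z) = 1

/-- Standing assumptions on the spatial domain `D` (a smooth bounded domain). -/
def DomainHyp {N : ℕ} (D : Set (V N)) : Prop :=
  IsOpen D ∧ D.Nonempty ∧ IsConnected D ∧ Bornology.IsBounded D

variable {N : ℕ}

/-- Membership in the time-periodic space `𝒳` of continuous functions, `T`-periodic in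
time and periodic in space with periods from `shifts` (elements of `C(ℝ × D̄)` are
represented by their continuous extensions). -/
def MemX (T : ℝ) (shifts : Set (V N)) (u : ℝ → V N → ℂ) : Prop :=
  Continuous (fun q : ℝ × V N => u q.1 q.2) ∧
  (∀ t x, u (t + T) x = u t x) ∧
  (∀ s ∈ shifts, ∀ t x, u t (x + s) = u t x)

/-- Membership of a real-valued weight function in `𝒳`. -/
def MemW (T : ℝ) (shifts : Set (V N)) (m : ℝ → V N → ℝ) : Prop :=
  Continuous (fun q : ℝ × V N => m q.1 q.2) ∧
  (∀ t x, m (t + T) x = m t x) ∧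
  (∀ s ∈ shifts, ∀ t x, m t (x + s) = m t x)

/-- The time derivative `∂ₜ u`. -/
def dtu (u : ℝ → V N → ℂ) (t : ℝ) (x : V N) : ℂ := deriv (fun s => u s x) t

/-- Membership in the domain of `𝓛 + λ m`: members of `𝒳` that are `C¹` in `t` with
`∂ₜ u ∈ 𝒳`. -/
def MemDom (T : ℝ) (shifts : Set (V N)) (u : ℝ → V N → ℂ) : Prop :=
  MemX T shifts u ∧ (∀ x, Differentiable ℝ (fun s => u s x)) ∧
  Continuous (fun q : ℝ × V N => dtu u q.1 q.2)

/-- The operator `(𝓛 + λ m) u`, where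
`(𝓛 u)(t,x) = -∂ₜu(t,x) + ∫_S κ(y - x) u(t,y) dy - b(x) u(t,x)`. -/
def Au (S : Set (V N)) (b κ : V N → ℝ) (lam : ℝ) (m : ℝ → V N → ℝ)
    (u : ℝ → V N → ℂ) (t : ℝ) (x : V N) : ℂ :=
  - dtu u t x + (∫ y in S, κ (y - x) • u t y) - (b x : ℂ) * u t x
    + (lam * m t x) • u t x

/-- Equality of representatives on the relevant spatial region `Ω`. -/
def EqOnD (Ω : Set (V N)) (u v : ℝ → V N → ℂ) : Prop := ∀ t : ℝ, ∀ x ∈ Ω, u t x = v t x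

/-- `μ` belongs to the resolvent set of `𝓛 + λ m` on `𝒳`: the operator
`𝓛 + λ m - μ`, from its domain to `𝒳`, is bijective. -/
def InResolvent (T : ℝ) (shifts : Set (V N)) (Ω S : Set (V N)) (b κ : V N → ℝ)
    (lam : ℝ) (m : ℝ → V N → ℝ) (μ : ℂ) : Prop :=
  (∀ f, MemX T shifts f →
    ∃ u, MemDom T shifts u ∧
      EqOnD Ω (fun t x => Au S b κ lam m u t x - μ * u t x) f) ∧
  (∀ u v, MemDom T shifts u → MemDom T shifts v →
    EqOnD Ω (fun t x => Au S b κ lam m u t x - μ * u t x)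
      (fun t x => Au S b κ lam m v t x - μ * v t x) →
    EqOnD Ω u v)

/-- The spectrum of `𝓛 + λ m` on `𝒳`. -/
def Spec (T : ℝ) (shifts : Set (V N)) (Ω S : Set (V N)) (b κ : V N → ℝ)
    (lam : ℝ) (m : ℝ → V N → ℝ) : Set ℂ :=
  {μ | ¬ InResolvent T shifts Ω S b κ lam m μ}

/-- The principal spectrum point `μⁿ(λ)` of `𝓛 + λ m`: the supremum of the real parts
of the spectrum. -/
def muN (T : ℝ) (shifts : Set (V N)) (Ω S : Set (V N)) (b κ : V N → ℝ)
    (lam : ℝ) (m : ℝ → V N → ℝ) : ℝ :=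
  sSup (Complex.re '' Spec T shifts Ω S b κ lam m)

/-- `μ` is a principal eigenvalue of `𝓛 + λ m`: the eigenvalue problem
`𝓛 u + λ m u = μ u` has a positive solution in `𝒳`. -/
def IsPrincipalEigenvalue (T : ℝ) (shifts : Set (V N)) (Ω S : Set (V N)) (b κ : V N → ℝ)
    (lam : ℝ) (m : ℝ → V N → ℝ) (μ : ℝ) : Prop :=
  ∃ u, MemDom T shifts u ∧ (∀ t : ℝ, ∀ x ∈ Ω, (u t x).im = 0 ∧ 0 < (u t x).re) ∧
    ∀ t : ℝ, ∀ x ∈ Ω, Au S b κ lam m u t x = (μ : ℂ) * u t x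

/-! ### Time-independent versions -/

/-- Membership in the space `X` of continuous (spatially periodic) functions. -/
def MemX0 (shifts : Set (V N)) (u : V N → ℂ) : Prop :=
  Continuous u ∧ (∀ s ∈ shifts, ∀ x, u (x + s) = u x)

/-- The time-independent operator `K u - b u + λ m u`. -/
def Au0 (S : Set (V N)) (b κ : V N → ℝ) (lam : ℝ) (m : V N → ℝ)
    (u : V N → ℂ) (x : V N) : ℂ :=
  (∫ y in S, κ (y - x) • u y) - (b x : ℂ) * u x + (lam * m x) • u x

/-- Equality of representatives on `Ω` (time-independent case). -/
def EqOnD0 (Ω : Set (V N)) (u v : V N → ℂ) : Prop := ∀ x ∈ Ω, u x = v x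

/-- `μ` belongs to the resolvent set of `K - b + λ m` on `X`. -/
def InResolvent0 (shifts : Set (V N)) (Ω S : Set (V N)) (b κ : V N → ℝ)
    (lam : ℝ) (m : V N → ℝ) (μ : ℂ) : Prop :=
  (∀ f, MemX0 shifts f →
    ∃ u, MemX0 shifts u ∧ EqOnD0 Ω (fun x => Au0 S b κ lam m u x - μ * u x) f) ∧
  (∀ u v, MemX0 shifts u → MemX0 shifts v →
    EqOnD0 Ω (fun x => Au0 S b κ lam m u x - μ * u x)
      (fun x => Au0 S b κ lam m v x - μ * v x) →
    EqOnD0 Ω u v)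

/-- The spectrum of `K - b + λ m` on `X`. -/
def Spec0 (shifts : Set (V N)) (Ω S : Set (V N)) (b κ : V N → ℝ)
    (lam : ℝ) (m : V N → ℝ) : Set ℂ :=
  {μ | ¬ InResolvent0 shifts Ω S b κ lam m μ}

/-- The principal spectrum point of the time-independent problem. -/
def muN0 (shifts : Set (V N)) (Ω S : Set (V N)) (b κ : V N → ℝ)
    (lam : ℝ) (m : V N → ℝ) : ℝ :=
  sSup (Complex.re '' Spec0 shifts Ω S b κ lam m)

/-! ### The evolution family Φ -/

/-- `U` is the solution of `∂ₜ u = K u - b u + a u` with initial value `u₀` at time `0`. -/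
def IsSol (shifts : Set (V N)) (Ω S : Set (V N)) (b κ : V N → ℝ)
    (a : ℝ → V N → ℝ) (u₀ : V N → ℂ) (U : ℝ → V N → ℂ) : Prop :=
  Continuous (fun q : ℝ × V N => U q.1 q.2) ∧
  (∀ s ∈ shifts, ∀ t x, U t (x + s) = U t x) ∧
  (∀ x ∈ Ω, U 0 x = u₀ x) ∧
  (∀ x, Differentiable ℝ (fun s => U s x)) ∧
  (∀ t : ℝ, ∀ x ∈ Ω,
    dtu U t x = (∫ y in S, κ (y - x) • U t y) - (b x : ℂ) * U t x + (a t x) • U t x)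

/-- The relation `w = Φ(T, 0; a) u₀` (as elements of `X`, i.e. on `Ω`). -/
def PhiT (T : ℝ) (shifts : Set (V N)) (Ω S : Set (V N)) (b κ : V N → ℝ)
    (a : ℝ → V N → ℝ) (u₀ w : V N → ℂ) : Prop :=
  ∃ U, IsSol shifts Ω S b κ a u₀ U ∧ ∀ x ∈ Ω, w x = U T x

/-- `μ` belongs to the resolvent set of the time-`T` solution operator `Φ(T, 0; a)`
on `X`. -/
def InResolventPhi (T : ℝ) (shifts : Set (V N)) (Ω S : Set (V N)) (b κ : V N → ℝ)
    (a : ℝ → V N → ℝ) (μ : ℂ) : Prop :=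
  ∀ f, MemX0 shifts f →
    (∃ u₀ w, MemX0 shifts u₀ ∧ PhiT T shifts Ω S b κ a u₀ w ∧
      EqOnD0 Ω (fun x => w x - μ * u₀ x) f) ∧
    (∀ u₀ u₀' w w', MemX0 shifts u₀ → MemX0 shifts u₀' →
      PhiT T shifts Ω S b κ a u₀ w → PhiT T shifts Ω S b κ a u₀' w' →
      EqOnD0 Ω (fun x => w x - μ * u₀ x) f → EqOnD0 Ω (fun x => w' x - μ * u₀' x) f →
      EqOnD0 Ω u₀ u₀')

/-- The spectrum of the time-`T` solution operator `Φ(T, 0; a)` on `X`. -/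
def SpecPhi (T : ℝ) (shifts : Set (V N)) (Ω S : Set (V N)) (b κ : V N → ℝ)
    (a : ℝ → V N → ℝ) : Set ℂ :=
  {μ | ¬ InResolventPhi T shifts Ω S b κ a μ}

/-- The spectral radius of `Φ(T, 0; a)`. -/
def specRadPhi (T : ℝ) (shifts : Set (V N)) (Ω S : Set (V N)) (b κ : V N → ℝ)
    (a : ℝ → V N → ℝ) : ℝ :=
  sSup ((fun μ : ℂ => ‖μ‖) '' SpecPhi T shifts Ω S b κ a)

/-! ### Auxiliary data -/

/-- The spatial periods `p₁ e₁, …, p_N e_N` for the periodic case. -/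
def pShifts (N : ℕ) (p : Fin N → ℝ) : Set (V N) :=
  Set.range (fun j : Fin N => p j • (EuclideanSpace.single j (1 : ℝ)))

/-- The periodicity cell `D₃ = [0, p₁] × ⋯ × [0, p_N]`. -/
def cell (N : ℕ) (p : Fin N → ℝ) : Set (V N) :=
  {x : V N | ∀ j : Fin N, x j ∈ Set.Icc 0 (p j)}

/-- The time average `m̂(x) = (1/T) ∫₀ᵀ m(t,x) dt` of the weight. -/
def mhat (T : ℝ) (m : ℝ → V N → ℝ) (x : V N) : ℝ := (1 / T) * ∫ t in (0:ℝ)..T, m t x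

/-- `𝒫(m) = ∫₀ᵀ max_{x ∈ Ω} m(t, x) dt`. -/
def Pm (T : ℝ) (Ω : Set (V N)) (m : ℝ → V N → ℝ) : ℝ :=
  ∫ t in (0:ℝ)..T, sSup ((m t) '' Ω)

end NW

namespace NW

variable {N : ℕ}

/-- The Neumann-type boundary term `b₂(x) = ∫_D κ(y - x) dy`. -/
def bNeu (D : Set (V N)) (κ : V N → ℝ) : V N → ℝ := fun x => ∫ y in D, κ (y - x)

/-- The principal spectrum point `μ₁ⁿ(λ)` of the Dirichlet-type problem `𝓛₁ + λ m`
on `𝒳₁` (shifts `∅`, `Ω = closure D`, `S = D`, `b = 1`). -/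
def muN1 (D : Set (V N)) (T : ℝ) (κ : V N → ℝ) (lam : ℝ) (m : ℝ → V N → ℝ) : ℝ :=
  muN T ∅ (closure D) D (fun _ => 1) κ lam m

/-- The principal spectrum point `μ₂ⁿ(λ)` of the Neumann-type problem `𝓛₂ + λ m`
on `𝒳₂`. -/
def muN2 (D : Set (V N)) (T : ℝ) (κ : V N → ℝ) (lam : ℝ) (m : ℝ → V N → ℝ) : ℝ :=
  muN T ∅ (closure D) D (bNeu D κ) κ lam m

/-- The principal spectrum point `μ₃ⁿ(λ)` of the spatially periodic problem `𝓛₃ + λ m`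
on `𝒳₃`. -/
def muN3 (p : Fin N → ℝ) (T : ℝ) (κ : V N → ℝ) (lam : ℝ) (m : ℝ → V N → ℝ) : ℝ :=
  muN T (pShifts N p) Set.univ Set.univ (fun _ => 1) κ lam m

/-- The principal spectrum point of the time-independent Dirichlet-type problem on `X₁`. -/
def muN01 (D : Set (V N)) (κ : V N → ℝ) (lam : ℝ) (m : V N → ℝ) : ℝ :=
  muN0 ∅ (closure D) D (fun _ => 1) κ lam m

/-- The principal spectrum point of the time-independent Neumann-type problem on `X₂`. -/
def muN02 (D : Set (V N)) (κ : V N → ℝ) (lam : ℝ) (m : V N → ℝ) : ℝ :=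
  muN0 ∅ (closure D) D (bNeu D κ) κ lam m

/-- The principal spectrum point of the time-independent spatially periodic problem
on `X₃`. -/
def muN03 (p : Fin N → ℝ) (κ : V N → ℝ) (lam : ℝ) (m : V N → ℝ) : ℝ :=
  muN0 (pShifts N p) Set.univ Set.univ (fun _ => 1) κ lam m

/-- `μ` is a principal eigenvalue of the Dirichlet-type problem `𝓛₁ + λ m`. -/
def IsPE1 (D : Set (V N)) (T : ℝ) (κ : V N → ℝ) (lam : ℝ) (m : ℝ → V N → ℝ) (μ : ℝ) : Prop :=
  IsPrincipalEigenvalue T ∅ (closure D) D (fun _ => 1) κ lam m μ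

/-- `μ` is a principal eigenvalue of the Neumann-type problem `𝓛₂ + λ m`. -/
def IsPE2 (D : Set (V N)) (T : ℝ) (κ : V N → ℝ) (lam : ℝ) (m : ℝ → V N → ℝ) (μ : ℝ) : Prop :=
  IsPrincipalEigenvalue T ∅ (closure D) D (bNeu D κ) κ lam m μ

/-- `μ` is a principal eigenvalue of the spatially periodic problem `𝓛₃ + λ m`. -/
def IsPE3 (p : Fin N → ℝ) (T : ℝ) (κ : V N → ℝ) (lam : ℝ) (m : ℝ → V N → ℝ) (μ : ℝ) : Prop :=
  IsPrincipalEigenvalue T (pShifts N p) Set.univ Set.univ (fun _ => 1) κ lam m μ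

end NW

/-!
At each point `x` the operator `ℋ - μ` is the scalar operator `w ↦ -w' + (a_x - μ) w` on
`T`-periodic functions, where `a_x(t) = -b(x) + λ m(t, x)` has time average `ĥ(x)`. By variation of
constants this scalar problem is uniquely solvable whenever `e^{∫₀ᵀ (a_x - μ)} ≠ 1`, in particular
whenever `Re μ ≠ ĥ(x)`, while for `μ = ĥ(x)` the forcing `e^{∫₀ᵗ (a_x - μ)}` has no periodic
preimage. So the real parts of the spectrum form `ĥ(D̄_i)`, which is `[min ĥ, max ĥ]` since `D̄_i` is
compact and connected (in the periodic case `ĥ(ℝ^N) = ĥ(D₃)` by periodicity).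
-/

namespace NW

open Complex (exp)
open scoped Convolution

section LinearODE

variable {a g w : ℝ → ℂ} {T : ℝ}

def duhamel (a g : ℝ → ℂ) (t : ℝ) : ℂ :=
  ∫ s in (0:ℝ)..t, exp (-∫ r in (0:ℝ)..s, a r) * g s

lemma hasDerivAt_exp_neg_primitive (ha : Continuous a) (t : ℝ) :
    HasDerivAt (fun t => exp (-∫ s in (0:ℝ)..t, a s))
      (exp (-∫ s in (0:ℝ)..t, a s) * -a t) t :=
  (ha.integral_hasStrictDerivAt 0 t).hasDerivAt.neg.cexp

lemma continuous_exp_neg_primitive_mul (ha : Continuous a) (hg : Continuous g) :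
    Continuous fun s => exp (-∫ r in (0:ℝ)..s, a r) * g s :=
  ((intervalIntegral.continuous_primitive (fun _ _ => ha.intervalIntegrable _ _) 0).neg.cexp).mul hg

lemma variation_of_constants (ha : Continuous a) (hg : Continuous g)
    (hw : ∀ t, HasDerivAt w (a t * w t - g t) t) (t : ℝ) :
    exp (-∫ s in (0:ℝ)..t, a s) * w t = w 0 - duhamel a g t := by
  set φ : ℝ → ℂ := fun t => exp (-∫ s in (0:ℝ)..t, a s) * w t + duhamel a g t
  have hφ : ∀ t, HasDerivAt φ 0 t := fun t => by
    refine (((hasDerivAt_exp_neg_primitive ha t).fun_mul (hw t)).fun_add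
      ((continuous_exp_neg_primitive_mul ha hg).integral_hasStrictDerivAt 0 t).hasDerivAt
      ).congr_deriv ?_
    ring
  have := is_const_of_deriv_eq_zero (fun t => (hφ t).differentiableAt)
    (fun t => (hφ t).deriv) t 0
  simp only [φ, duhamel, intervalIntegral.integral_same, neg_zero, Complex.exp_zero,
    one_mul, add_zero] at this
  exact eq_sub_of_add_eq this

lemma eq_zero_of_hasDerivAt_mul (ha : Continuous a) (hw : ∀ t, HasDerivAt w (a t * w t) t)
    (h0 : w 0 = 0) (t : ℝ) : w t = 0 := by
  have := variation_of_constants ha continuous_const (g := 0) (by simpa using hw) t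
  simpa [duhamel, h0, Complex.exp_ne_zero] using this

lemma periodic_of_hasDerivAt (ha : Continuous a) (haT : a.Periodic T) (hgT : g.Periodic T)
    (hw : ∀ t, HasDerivAt w (a t * w t - g t) t) (hwT : w T = w 0) : w.Periodic T := by
  have hv : ∀ t, HasDerivAt (fun t => w (t + T) - w t) (a t * (w (t + T) - w t)) t :=
    fun t => by
      refine (((hw (t + T)).comp_add_const t T).fun_sub (hw t)).congr_deriv ?_
      rw [haT, hgT]
      ring
  intro t
  exact sub_eq_zero.mp (eq_zero_of_hasDerivAt_mul ha hv (by simp [hwT]) t)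

lemma eq_zero_of_hasDerivAt_mul_of_periodic (ha : Continuous a)
    (hres : exp (∫ s in (0:ℝ)..T, a s) ≠ 1) (hw : ∀ t, HasDerivAt w (a t * w t) t)
    (hwT : w T = w 0) (t : ℝ) : w t = 0 := by
  refine eq_zero_of_hasDerivAt_mul ha hw ?_ t
  have h := variation_of_constants ha continuous_const (g := 0) (by simpa using hw) T
  rw [hwT] at h
  have hne : exp (-∫ s in (0:ℝ)..T, a s) ≠ 1 := by
    rwa [Complex.exp_neg, inv_ne_one]
  simp only [duhamel, Pi.zero_apply, mul_zero, intervalIntegral.integral_zero, sub_zero] at h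
  have h' : (exp (-∫ s in (0:ℝ)..T, a s) - 1) * w 0 = 0 := by rw [sub_mul, h, one_mul, sub_self]
  exact (mul_eq_zero.mp h').resolve_left (sub_ne_zero.mpr hne)

/-- The `T`-periodic solution of `w' = a w - g`, obtained by choosing the initial value
`w 0 = w T` in the variation of constants formula. -/
def periodicSolution (T : ℝ) (a g : ℝ → ℂ) (t : ℝ) : ℂ :=
  exp (∫ s in (0:ℝ)..t, a s) *
    (exp (∫ s in (0:ℝ)..T, a s) * duhamel a g T / (exp (∫ s in (0:ℝ)..T, a s) - 1) -
      duhamel a g t)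

lemma hasDerivAt_periodicSolution (ha : Continuous a) (hg : Continuous g) (t : ℝ) :
    HasDerivAt (periodicSolution T a g) (a t * periodicSolution T a g t - g t) t := by
  have hD : HasDerivAt (duhamel a g) (exp (-∫ s in (0:ℝ)..t, a s) * g t) t :=
    ((continuous_exp_neg_primitive_mul ha hg).integral_hasStrictDerivAt 0 t).hasDerivAt
  refine (((ha.integral_hasStrictDerivAt 0 t).hasDerivAt.cexp).fun_mul
    ((hasDerivAt_const t _).fun_sub hD)).congr_deriv ?_
  simp only [periodicSolution]
  rw [Complex.exp_neg]
  field_simp [Complex.exp_ne_zero]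
  ring

lemma periodicSolution_period (hres : exp (∫ s in (0:ℝ)..T, a s) ≠ 1) :
    periodicSolution T a g T = periodicSolution T a g 0 := by
  have hne : exp (∫ s in (0:ℝ)..T, a s) - 1 ≠ 0 := sub_ne_zero.mpr hres
  simp only [periodicSolution, duhamel, intervalIntegral.integral_same, Complex.exp_zero,
    one_mul, sub_zero]
  field_simp
  ring

lemma periodic_periodicSolution (ha : Continuous a) (hg : Continuous g)
    (haT : a.Periodic T) (hgT : g.Periodic T) (hres : exp (∫ s in (0:ℝ)..T, a s) ≠ 1) :
    (periodicSolution T a g).Periodic T :=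
  periodic_of_hasDerivAt ha haT hgT (hasDerivAt_periodicSolution ha hg)
    (periodicSolution_period hres)

lemma periodic_exp_primitive (ha : Continuous a) (haT : a.Periodic T)
    (hres : exp (∫ s in (0:ℝ)..T, a s) = 1) :
    (fun t => exp (∫ s in (0:ℝ)..t, a s)).Periodic T :=
  periodic_of_hasDerivAt (g := 0) ha haT (fun _ => rfl)
    (fun t => by simpa [mul_comm] using (ha.integral_hasStrictDerivAt 0 t).hasDerivAt.cexp)
    (by simp [hres])

/-- By variation of constants every solution satisfies `w T = w 0 - T`. -/
lemma not_periodic_of_exp_eq_one (ha : Continuous a) (hT : T ≠ 0)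
    (hres : exp (∫ s in (0:ℝ)..T, a s) = 1)
    (hw : ∀ t, HasDerivAt w (a t * w t - exp (∫ s in (0:ℝ)..t, a s)) t) : w T ≠ w 0 := by
  have h := variation_of_constants ha
    (intervalIntegral.continuous_primitive (fun _ _ => ha.intervalIntegrable _ _) 0).cexp hw T
  have hD : duhamel a (fun t => exp (∫ s in (0:ℝ)..t, a s)) T = T := by
    simp [duhamel, ← Complex.exp_add]
  rw [hD, Complex.exp_neg, hres, inv_one, one_mul] at h
  intro hwT
  rw [hwT] at h
  exact hT (by exact_mod_cast sub_eq_self.mp h.symm)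

end LinearODE

section Parametric

variable {X : Type*} [TopologicalSpace X] {T : ℝ}

lemma continuous_parametric_primitive {F : ℝ → X → ℂ}
    (hF : Continuous fun q : ℝ × X => F q.1 q.2) :
    Continuous fun q : ℝ × X => ∫ s in (0:ℝ)..q.1, F s q.2 :=
  (intervalIntegral.continuous_parametric_primitive_of_continuous (a₀ := 0)
    (f := fun x s => F s x) (hF.comp continuous_swap)).comp continuous_swap

lemma continuous_periodicSolution {a g : ℝ → X → ℂ}
    (ha : Continuous fun q : ℝ × X => a q.1 q.2) (hg : Continuous fun q : ℝ × X => g q.1 q.2)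
    (hres : ∀ x, exp (∫ s in (0:ℝ)..T, a s x) ≠ 1) :
    Continuous fun q : ℝ × X => periodicSolution T (a · q.2) (g · q.2) q.1 := by
  have hP := continuous_parametric_primitive ha
  have hD : Continuous fun q : ℝ × X => duhamel (a · q.2) (g · q.2) q.1 :=
    continuous_parametric_primitive (F := fun s x => exp (-∫ r in (0:ℝ)..s, a r x) * g s x)
      (hP.neg.cexp.mul hg)
  have hPT : Continuous fun x => exp (∫ s in (0:ℝ)..T, a s x) :=
    (hP.comp (Continuous.prodMk_right T)).cexp
  have hDT : Continuous fun x => duhamel (a · x) (g · x) T := hD.comp (Continuous.prodMk_right T)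
  have hc : Continuous fun x =>
      exp (∫ s in (0:ℝ)..T, a s x) * duhamel (a · x) (g · x) T /
        (exp (∫ s in (0:ℝ)..T, a s x) - 1) :=
    (hPT.mul hDT).div (hPT.sub continuous_const) fun x => sub_ne_zero.mpr (hres x)
  exact hP.cexp.mul ((hc.comp continuous_snd).sub hD)

end Parametric

variable {N : ℕ} {T : ℝ} {shifts Ω S : Set (V N)} {b : V N → ℝ} {lam : ℝ}
  {m : ℝ → V N → ℝ}

section Fibres

lemma continuous_mhat (hm : Continuous fun q : ℝ × V N => m q.1 q.2) :
    Continuous (mhat T m) :=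
  continuous_const.mul (intervalIntegral.continuous_parametric_intervalIntegral_of_continuous'
    (f := fun x t => m t x) (hm.comp continuous_swap) 0 T)

lemma mhat_add {s : V N} (hms : ∀ t x, m t (x + s) = m t x) (x : V N) :
    mhat T m (x + s) = mhat T m x := by
  simp only [mhat, hms]

lemma continuous_neg_add_mul (hm : Continuous fun q : ℝ × V N => m q.1 q.2) (x : V N) :
    Continuous fun t => -b x + lam * m t x :=
  continuous_const.add (continuous_const.mul (hm.comp (Continuous.prodMk_left x)))

lemma integral_neg_add_mul (hT : T ≠ 0) (hm : Continuous fun q : ℝ × V N => m q.1 q.2) (x : V N) :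
    ∫ t in (0:ℝ)..T, (-b x + lam * m t x) = T * (-b x + lam * mhat T m x) := by
  have hmx : Continuous (m · x) := hm.comp (Continuous.prodMk_left x)
  rw [intervalIntegral.integral_add intervalIntegrable_const
    ((continuous_const.fun_mul hmx).intervalIntegrable 0 T), intervalIntegral.integral_const,
    intervalIntegral.integral_const_mul, mhat]
  field_simp
  ring

lemma integral_ofReal_sub {β : ℝ → ℝ} (hβ : Continuous β) (μ : ℂ) :
    ∫ t in (0:ℝ)..T, ((β t : ℂ) - μ) = ((∫ t in (0:ℝ)..T, β t : ℝ) : ℂ) - T * μ := by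
  rw [intervalIntegral.integral_sub (f := fun t => (β t : ℂ))
    ((Complex.continuous_ofReal.comp hβ).intervalIntegrable 0 T)
    intervalIntegrable_const, intervalIntegral.integral_ofReal, intervalIntegral.integral_const,
    sub_zero, Complex.real_smul]

lemma exp_integral_ofReal_sub_ne_one {β : ℝ → ℝ} (hβ : Continuous β) {μ : ℂ}
    (h : ∫ t in (0:ℝ)..T, β t ≠ T * μ.re) :
    exp (∫ t in (0:ℝ)..T, ((β t : ℂ) - μ)) ≠ 1 := by
  rw [integral_ofReal_sub hβ]
  intro h1
  obtain ⟨n, hn⟩ := Complex.exp_eq_one_iff.mp h1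
  apply h
  simpa [sub_eq_zero] using congrArg Complex.re hn

lemma continuous_neg_add_mul_mhat (hb : Continuous b)
    (hm : Continuous fun q : ℝ × V N => m q.1 q.2) :
    Continuous fun x => -b x + lam * mhat T m x :=
  hb.neg.add (continuous_const.mul (continuous_mhat hm))

lemma Au_zero_sub (u : ℝ → V N → ℂ) (μ : ℂ) (t : ℝ) (x : V N) :
    Au S b (fun _ => 0) lam m u t x - μ * u t x =
      -(dtu u t x - (((-b x + lam * m t x : ℝ) : ℂ) - μ) * u t x) := by
  simp only [Au, zero_smul, integral_zero, Complex.real_smul]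
  push_cast
  ring

end Fibres

section Spectrum

lemma exists_memDom_hasDerivAt {α : ℝ → V N → ℂ}
    (hα : Continuous fun q : ℝ × V N => α q.1 q.2) (hαT : ∀ x, (α · x).Periodic T)
    (hαs : ∀ s ∈ shifts, ∀ t x, α t (x + s) = α t x)
    (hres : ∀ x, exp (∫ t in (0:ℝ)..T, α t x) ≠ 1) {f : ℝ → V N → ℂ}
    (hf : MemX T shifts f) :
    ∃ u, MemDom T shifts u ∧ ∀ t x, dtu u t x = α t x * u t x - f t x := by
  set u : ℝ → V N → ℂ := fun t x => periodicSolution T (α · x) (f · x) t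
  have hαx : ∀ x, Continuous (α · x) := fun x => hα.comp (Continuous.prodMk_left x)
  have hfx : ∀ x, Continuous (f · x) := fun x => hf.1.comp (Continuous.prodMk_left x)
  have hu : ∀ t x, HasDerivAt (u · x) (α t x * u t x - f t x) t := fun t x =>
    hasDerivAt_periodicSolution (hαx x) (hfx x) t
  have huc : Continuous fun q : ℝ × V N => u q.1 q.2 := continuous_periodicSolution hα hf.1 hres
  have hdtu : ∀ t x, dtu u t x = α t x * u t x - f t x := fun t x => (hu t x).deriv
  refine ⟨u, ⟨⟨huc, fun t x => ?_, fun s hs t x => ?_⟩, fun x t => (hu t x).differentiableAt,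
    ?_⟩, hdtu⟩
  · exact periodic_periodicSolution (hαx x) (hfx x) (hαT x) (fun t => hf.2.1 t x) (hres x) t
  · simp only [u, hαs s hs, hf.2.2 s hs]
  · simp only [hdtu]
    exact (hα.mul huc).sub hf.1

/-- Off `Ω` the average `ĥ` of the coefficient is clamped into `[m₁, m₂]`, so that the fibre
equations are nonresonant at every point and their periodic solutions depend continuously
on `x`. -/
lemma exists_memDom_Au_sub_eq (hT : T ≠ 0) (hb : Continuous b)
    (hbs : ∀ s ∈ shifts, ∀ x, b (x + s) = b x) (hm : MemW T shifts m) {m₁ m₂ : ℝ}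
    (hle : m₁ ≤ m₂) (hΩ : MapsTo (fun x => -b x + lam * mhat T m x) Ω (Icc m₁ m₂))
    {μ : ℂ} (hμ : μ.re ∉ Icc m₁ m₂) {f : ℝ → V N → ℂ} (hf : MemX T shifts f) :
    ∃ u, MemDom T shifts u ∧
      EqOnD Ω (fun t x => Au S b (fun _ => 0) lam m u t x - μ * u t x) f := by
  set h : V N → ℝ := fun x => -b x + lam * mhat T m x
  have hh : Continuous h := continuous_neg_add_mul_mhat hb hm.1
  set c : V N → ℝ := fun x => projIcc m₁ m₂ hle (h x)
  set β : ℝ → V N → ℝ := fun t x => -b x + lam * m t x + (c x - h x)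
  have hβ : Continuous fun q : ℝ × V N => β q.1 q.2 :=
    ((hb.comp continuous_snd).neg.add (continuous_const.mul hm.1)).add
      (((continuous_subtype_val.comp (continuous_projIcc.comp hh)).sub hh).comp continuous_snd)
  have hβx : ∀ x, Continuous (β · x) := fun x => hβ.comp (Continuous.prodMk_left x)
  have hβint : ∀ x, ∫ t in (0:ℝ)..T, β t x = T * c x := fun x => by
    rw [intervalIntegral.integral_add ((continuous_neg_add_mul hm.1 x).intervalIntegrable 0 T)
      intervalIntegrable_const, integral_neg_add_mul hT hm.1, intervalIntegral.integral_const,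
      smul_eq_mul, sub_zero]
    ring
  obtain ⟨u, hu, hdtu⟩ := exists_memDom_hasDerivAt (α := fun t x => (β t x : ℂ) - μ)
    ((Complex.continuous_ofReal.comp hβ).sub continuous_const)
    (fun x t => by simp only [β, hm.2.1])
    (fun s hs t x => by simp only [β, c, h, hbs s hs, hm.2.2 s hs, mhat_add (hm.2.2 s hs)])
    (fun x => exp_integral_ofReal_sub_ne_one (hβx x) fun heq => hμ (by
      rw [hβint x, mul_right_inj' hT] at heq
      exact heq ▸ (projIcc m₁ m₂ hle (h x)).2))
    hf
  refine ⟨u, hu, fun t x hx => ?_⟩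
  have hcx : c x = h x := congrArg Subtype.val (projIcc_of_mem hle (hΩ hx))
  dsimp only
  rw [Au_zero_sub, hdtu]
  simp only [β, hcx, sub_self, add_zero]
  ring

lemma eqOnD_of_Au_sub_eq (hT : T ≠ 0) (hm : MemW T shifts m) {μ : ℂ}
    (hμ : ∀ x ∈ Ω, -b x + lam * mhat T m x ≠ μ.re) {u v : ℝ → V N → ℂ}
    (hu : MemDom T shifts u) (hv : MemDom T shifts v)
    (huv : EqOnD Ω (fun t x => Au S b (fun _ => 0) lam m u t x - μ * u t x)
      (fun t x => Au S b (fun _ => 0) lam m v t x - μ * v t x)) :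
    EqOnD Ω u v := by
  intro t x hx
  have hβ := continuous_neg_add_mul (b := b) (lam := lam) hm.1 x
  have hw : ∀ t, HasDerivAt (fun t => u t x - v t x)
      ((((-b x + lam * m t x : ℝ) : ℂ) - μ) * (u t x - v t x)) t := fun t => by
    refine ((hu.2.1 x t).hasDerivAt.sub (hv.2.1 x t).hasDerivAt).congr_deriv ?_
    have := huv t x hx
    simp only [Au_zero_sub, neg_inj, dtu] at this
    linear_combination this
  refine sub_eq_zero.mp (eq_zero_of_hasDerivAt_mul_of_periodic (T := T)
    ((Complex.continuous_ofReal.comp hβ).sub continuous_const) ?_ hw ?_ t)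
  · refine exp_integral_ofReal_sub_ne_one hβ fun heq => hμ x hx ?_
    rwa [integral_neg_add_mul hT hm.1, mul_right_inj' hT] at heq
  · have hu0 := hu.1.2.1 0 x
    have hv0 := hv.1.2.1 0 x
    rw [zero_add] at hu0 hv0
    rw [hu0, hv0]

lemma ofReal_mem_spec (hT : T ≠ 0) (hm : MemW T shifts m) {x₀ : V N} (hx₀ : x₀ ∈ Ω) :
    ((-b x₀ + lam * mhat T m x₀ : ℝ) : ℂ) ∈ Spec T shifts Ω S b (fun _ => 0) lam m := by
  rintro ⟨hsurj, -⟩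
  set a : ℝ → ℂ := fun t =>
    ((-b x₀ + lam * m t x₀ : ℝ) : ℂ) - ((-b x₀ + lam * mhat T m x₀ : ℝ) : ℂ)
  have ha : Continuous a :=
    (Complex.continuous_ofReal.comp (continuous_neg_add_mul hm.1 x₀)).sub continuous_const
  have haT : a.Periodic T := fun t => by simp only [a, hm.2.1]
  have hres : exp (∫ t in (0:ℝ)..T, a t) = 1 := by
    rw [integral_ofReal_sub (continuous_neg_add_mul hm.1 x₀), integral_neg_add_mul hT hm.1]
    simp
  set f : ℝ → V N → ℂ := fun t _ => exp (∫ s in (0:ℝ)..t, a s)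
  have hf : MemX T shifts f :=
    ⟨(intervalIntegral.continuous_primitive (fun _ _ => ha.intervalIntegrable _ _) 0).cexp.comp
      continuous_fst, fun t _ => periodic_exp_primitive ha haT hres t, fun _ _ _ _ => rfl⟩
  obtain ⟨u, hu, hAu⟩ := hsurj f hf
  refine not_periodic_of_exp_eq_one ha hT hres (w := (u · x₀)) (fun t => ?_) ?_
  · refine (hu.2.1 x₀ t).hasDerivAt.congr_deriv ?_
    have := hAu t x₀ hx₀
    simp only [Au_zero_sub, dtu] at this
    linear_combination -this
  · have := hu.1.2.1 0 x₀
    rwa [zero_add] at this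

theorem re_spec_eq_Icc (hT : T ≠ 0) (hb : Continuous b)
    (hbs : ∀ s ∈ shifts, ∀ x, b (x + s) = b x) (hm : MemW T shifts m) {m₁ m₂ : ℝ}
    (hle : m₁ ≤ m₂) (hΩ : (fun x => -b x + lam * mhat T m x) '' Ω = Icc m₁ m₂) :
    Complex.re '' Spec T shifts Ω S b (fun _ => 0) lam m = Icc m₁ m₂ := by
  apply Subset.antisymm
  · rintro _ ⟨μ, hμ, rfl⟩
    by_contra hout
    exact hμ ⟨fun f hf => exists_memDom_Au_sub_eq hT hb hbs hm hle (hΩ ▸ mapsTo_image _ _) hout hf,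
      fun u v => eqOnD_of_Au_sub_eq hT hm fun x hx heq => hout (heq ▸ hΩ ▸ mem_image_of_mem _ hx)⟩
  · rw [← hΩ]
    rintro _ ⟨x₀, hx₀, rfl⟩
    exact ⟨_, ofReal_mem_spec hT hm hx₀, Complex.ofReal_re _⟩

theorem re_spec_eq_Icc_sInf_sSup (hT : T ≠ 0) (hb : Continuous b)
    (hbs : ∀ s ∈ shifts, ∀ x, b (x + s) = b x) (hm : MemW T shifts m) {C : Set (V N)}
    (hC : IsCompact C) (hCc : IsConnected C)
    (hΩC : (fun x => -b x + lam * mhat T m x) '' Ω = (fun x => -b x + lam * mhat T m x) '' C) :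
    Complex.re '' Spec T shifts Ω S b (fun _ => 0) lam m =
      Icc (sInf ((fun x => -b x + lam * mhat T m x) '' C))
        (sSup ((fun x => -b x + lam * mhat T m x) '' C)) := by
  have hh := continuous_neg_add_mul_mhat (T := T) (lam := lam) hb hm.1
  have hCh := hC.image hh
  refine re_spec_eq_Icc hT hb hbs hm ?_
    (hΩC.trans (eq_Icc_of_connected_compact (hCc.image _ hh.continuousOn) hCh))
  exact csInf_le_csSup (hCc.nonempty.image _) hCh.bddBelow hCh.bddAbove

end Spectrum

lemma continuous_bNeu {D : Set (V N)} (hD : MeasurableSet D) (hDf : volume D ≠ ⊤)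
    {κ : V N → ℝ} (hκ : KernelHyp κ) : Continuous (bNeu D κ) := by
  have hconv : bNeu D κ = D.indicator 1 ⋆[ContinuousLinearMap.mul ℝ ℝ] κ := funext fun x => by
    rw [convolution_mul, bNeu, ← integral_indicator hD]
    congr 1 with y
    by_cases hy : y ∈ D
    · simp [hy, ← hκ.symm (y - x)]
    · simp [hy]
  rw [hconv]
  exact hκ.compSupp.continuous_convolution_right _
    ((integrable_indicator_iff hD).2 (integrableOn_const hDf)).locallyIntegrable hκ.cont

lemma cell_eq_image_pi (p : Fin N → ℝ) :
    cell N p = WithLp.toLp 2 '' univ.pi fun j => Icc 0 (p j) := by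
  ext x
  constructor
  · exact fun hx => ⟨x.ofLp, fun j _ => hx j, rfl⟩
  · rintro ⟨y, hy, rfl⟩ j
    exact hy j (mem_univ j)

lemma isCompact_cell (p : Fin N → ℝ) : IsCompact (cell N p) := by
  rw [cell_eq_image_pi]
  exact (isCompact_univ_pi fun _ => isCompact_Icc).image (PiLp.continuous_toLp 2 _)

lemma isConnected_cell {p : Fin N → ℝ} (hp : ∀ j, 0 ≤ p j) : IsConnected (cell N p) := by
  rw [cell_eq_image_pi]
  exact (isConnected_univ_pi.2 fun j => isConnected_Icc (hp j)).image _
    (PiLp.continuous_toLp 2 _).continuousOn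

lemma image_univ_eq_image_cell {α : Type*} {p : Fin N → ℝ} (hp : ∀ j, 0 < p j)
    {F : V N → α} (hF : ∀ s ∈ pShifts N p, ∀ x, F (x + s) = F x) :
    F '' univ = F '' cell N p := by
  refine (image_mono (subset_univ _)).antisymm' ?_
  rintro _ ⟨x, -, rfl⟩
  have hperiod : ∀ v ∈ AddSubgroup.closure (pShifts N p), ∀ x, F (x + v) = F x := by
    intro v hv
    induction hv using AddSubgroup.closure_induction with
    | mem s hs => exact hF s hs
    | zero => simp
    | add u v _ _ hu hv => intro x; rw [← add_assoc, hv, hu]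
    | neg u _ hu => intro x; rw [← hu (x + -u), neg_add_cancel_right]
  set x' : V N := WithLp.toLp 2 fun j => toIcoMod (hp j) 0 (x j)
  have hx' : x' ∈ cell N p := fun j => Ico_subset_Icc_self (toIcoMod_mem_Ico' (hp j) (x j))
  have hx : x = x' + ∑ j, toIcoDiv (hp j) 0 (x j) • p j • EuclideanSpace.single j (1 : ℝ) := by
    ext i
    simp only [x', PiLp.add_apply, WithLp.ofLp_sum, WithLp.ofLp_smul, PiLp.ofLp_single,
      zsmul_eq_mul, Algebra.mul_smul_comm, Finset.sum_apply, Pi.smul_apply, Pi.mul_apply,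
      Pi.intCast_apply, Pi.single_apply, mul_ite, mul_one, mul_zero, smul_eq_mul,
      Finset.sum_ite_eq, Finset.mem_univ, if_true]
    rw [mul_comm, ← zsmul_eq_mul, toIcoMod_add_toIcoDiv_zsmul]
  refine ⟨x', hx', ?_⟩
  rw [hx]
  exact (hperiod _ (AddSubgroup.sum_mem _ fun j _ => AddSubgroup.zsmul_mem _
    (AddSubgroup.subset_closure (mem_range_self j)) _) x').symm

end NW

theorem multiplication_operator_spectrum_general
    (N : ℕ) (D : Set (NW.V N)) (hD : NW.DomainHyp D)
    (T : ℝ) (hT : 0 < T) (p : Fin N → ℝ) (hp : ∀ j, 0 < p j)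
    (κ : NW.V N → ℝ) (hκ : NW.KernelHyp κ) :
    -- i = 1 (Dirichlet type, b₁ = 1)
    (∀ m : ℝ → NW.V N → ℝ, NW.MemW T ∅ m → ∀ lam : ℝ,
      Complex.re '' NW.Spec T (∅ : Set (NW.V N)) (closure D) D (fun _ => 1)
          (fun _ => 0) lam m =
        Set.Icc (sInf ((fun x => -(1:ℝ) + lam * NW.mhat T m x) '' closure D))
          (sSup ((fun x => -(1:ℝ) + lam * NW.mhat T m x) '' closure D))) ∧
    -- i = 2 (Neumann type, b₂ = ∫_D κ(y - ·) dy)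
    (∀ m : ℝ → NW.V N → ℝ, NW.MemW T ∅ m → ∀ lam : ℝ,
      Complex.re '' NW.Spec T (∅ : Set (NW.V N)) (closure D) D (NW.bNeu D κ)
          (fun _ => 0) lam m =
        Set.Icc (sInf ((fun x => -(NW.bNeu D κ x) + lam * NW.mhat T m x) '' closure D))
          (sSup ((fun x => -(NW.bNeu D κ x) + lam * NW.mhat T m x) '' closure D))) ∧
    -- i = 3 (spatially periodic type, b₃ = 1, D̄₃ = cell)
    (∀ m : ℝ → NW.V N → ℝ, NW.MemW T (NW.pShifts N p) m → ∀ lam : ℝ,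
      Complex.re '' NW.Spec T (NW.pShifts N p) Set.univ Set.univ (fun _ => 1)
          (fun _ => 0) lam m =
        Set.Icc (sInf ((fun x => -(1:ℝ) + lam * NW.mhat T m x) '' NW.cell N p))
          (sSup ((fun x => -(1:ℝ) + lam * NW.mhat T m x) '' NW.cell N p))) := by
  obtain ⟨hDo, -, hDc, hDb⟩ := hD
  have hC : IsCompact (closure D) := hDb.isCompact_closure
  refine ⟨fun m hm lam => ?_, fun m hm lam => ?_, fun m hm lam => ?_⟩
  · exact NW.re_spec_eq_Icc_sInf_sSup hT.ne' continuous_const (by simp) hm hC hDc.closure rfl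
  · exact NW.re_spec_eq_Icc_sInf_sSup hT.ne'
      (NW.continuous_bNeu hDo.measurableSet hDb.measure_lt_top.ne hκ) (by simp) hm hC
      hDc.closure rfl
  · exact NW.re_spec_eq_Icc_sInf_sSup hT.ne' continuous_const (fun _ _ _ => rfl) hm
      (NW.isCompact_cell p) (NW.isConnected_cell fun j => (hp j).le)
      (NW.image_univ_eq_image_cell hp fun s hs x => by simp only [NW.mhat_add (hm.2.2 s hs)])

/-- (Proposition 3.4(1)), for each `i ∈ {1, 2, 3}`: the set of real
parts of the spectrum of `ℋ_i u = -∂ₜu + (-b_i + λ m) u` on `𝒳_i` is the closed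
interval `[min_{x ∈ D̄_i} ĥ(x), max_{x ∈ D̄_i} ĥ(x)]`, where `ĥ(x) = -b_i(x) + λ m̂(x)`.
(Here `ℋ_i` is obtained from `𝓛_i + λ m` by replacing the kernel with `0`.) -/
theorem multiplication_operator_spectrum
    (N : ℕ) (hN : 1 ≤ N) (D : Set (NW.V N)) (hD : NW.DomainHyp D)
    (T : ℝ) (hT : 0 < T) (p : Fin N → ℝ) (hp : ∀ j, 0 < p j)
    (κ : NW.V N → ℝ) (hκ : NW.KernelHyp κ) :
    -- i = 1 (Dirichlet type, b₁ = 1)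
    (∀ m : ℝ → NW.V N → ℝ, NW.MemW T ∅ m → ∀ lam : ℝ,
      Complex.re '' NW.Spec T (∅ : Set (NW.V N)) (closure D) D (fun _ => 1)
          (fun _ => 0) lam m =
        Set.Icc (sInf ((fun x => -(1:ℝ) + lam * NW.mhat T m x) '' closure D))
          (sSup ((fun x => -(1:ℝ) + lam * NW.mhat T m x) '' closure D))) ∧
    -- i = 2 (Neumann type, b₂ = ∫_D κ(y - ·) dy)
    (∀ m : ℝ → NW.V N → ℝ, NW.MemW T ∅ m → ∀ lam : ℝ,
      Complex.re '' NW.Spec T (∅ : Set (NW.V N)) (closure D) D (NW.bNeu D κ)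
          (fun _ => 0) lam m =
        Set.Icc (sInf ((fun x => -(NW.bNeu D κ x) + lam * NW.mhat T m x) '' closure D))
          (sSup ((fun x => -(NW.bNeu D κ x) + lam * NW.mhat T m x) '' closure D))) ∧
    -- i = 3 (spatially periodic type, b₃ = 1, D̄₃ = cell)
    (∀ m : ℝ → NW.V N → ℝ, NW.MemW T (NW.pShifts N p) m → ∀ lam : ℝ,
      Complex.re '' NW.Spec T (NW.pShifts N p) Set.univ Set.univ (fun _ => 1)
          (fun _ => 0) lam m =
        Set.Icc (sInf ((fun x => -(1:ℝ) + lam * NW.mhat T m x) '' NW.cell N p))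
          (sSup ((fun x => -(1:ℝ) + lam * NW.mhat T m x) '' NW.cell N p))) :=
  multiplication_operator_spectrum_general N D hD T hT p hp κ hκ
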